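/- If $A$ is a subring of the field of algebraic numbers (the algebraic closure of $\mathbb{Q}$), then the only factroids of $A$ are $\{0\}$ and $A$. -/

import Mathlib

def AddSubgroup.IsFactroid {A : Type*} [Ring A] (F : AddSubgroup A) : Prop :=
  ∀ b a : A, b ≠ 0 → b * a ∈ F → a ∈ F

/- Pick `x ≠ 0` in `F`. A nonzero `a` divides some nonzero integer `c`, say `a * m = c`;
then `(m * x) * a = c • x ∈ F` with `m * x ≠ 0`, so `a ∈ F`. -/
theorem AddSubgroup.IsFactroid.eq_bot_or_eq_top {A : Type*} [CommRing A] [NoZeroDivisors A]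
    [CharZero A] [Algebra.IsAlgebraic ℤ A] {F : AddSubgroup A} (hF : F.IsFactroid) :
    F = ⊥ ∨ F = ⊤ := by
  refine F.bot_or_exists_ne_zero.imp_right fun ⟨x, hxF, hx0⟩ ↦ eq_top_iff' F |>.mpr fun a ↦ ?_
  rcases eq_or_ne a 0 with rfl | ha
  · exact F.zero_mem
  obtain ⟨c, hc, m, hm⟩ := (Algebra.IsAlgebraic.isAlgebraic (R := ℤ) a).exists_nonzero_dvd
    (mem_nonZeroDivisors_of_ne_zero ha)
  rw [algebraMap_int_eq, eq_intCast] at hm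
  have hm0 : m ≠ 0 := right_ne_zero_of_mul (hm ▸ Int.cast_ne_zero.mpr hc)
  refine hF (m * x) a (mul_ne_zero hm0 hx0) ?_
  have hmxa : m * x * a = c • x := by rw [zsmul_eq_mul, hm]; ring
  exact hmxa ▸ F.zsmul_mem hxF c

theorem Subring.isAlgebraic_int {K : Type*} [Field K] [Algebra ℚ K]
    (hK : Algebra.IsAlgebraic ℚ K) (A : Subring K) : Algebra.IsAlgebraic ℤ A :=
  haveI := (IsFractionRing.comap_isAlgebraic_iff (A := ℤ) (K := ℚ) (C := K)).mpr hK
  .of_injective A.subtype.toIntAlgHom Subtype.val_injective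

/-- If `A` is a subring of the field of algebraic numbers, then the only factroids of
`A` are `{0}` and `A`. -/
theorem stmt_14 (A : Subring (AlgebraicClosure ℚ)) (F : AddSubgroup A)
    (hF : ∀ b a : A, b ≠ 0 → b * a ∈ F → a ∈ F) :
    F = ⊥ ∨ F = ⊤ :=
  have := Subring.isAlgebraic_int (AlgebraicClosure.isAlgebraic ℚ) A
  AddSubgroup.IsFactroid.eq_bot_or_eq_top hF
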